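/- Let H = (V,E,w) be an edge-weighted hypergraph, let k ≥ 1, and let u_i ∈ ℝ^k for i ∈ V be arbitrary vectors. Let S ⊆ V contain at least one vertex i with u_i ≠ 0. Define μ(S) := Σ_{i ∈ S} w_i ‖u_i‖² and ν(S) := Σ_{e ∈ E : e ⊆ S} w_e · (max_{i ∈ e} ‖u_i‖² − min_{i ∈ e} ‖u_i‖²) + Σ_{e ∈ ∂S} w_e · max_{i ∈ S ∩ e} ‖u_i‖², and for r > 0 let S_r := {i ∈ S : ‖u_i‖² ≥ r}. Then there exists r > 0 such that S_r ≠ ∅ and φ(S_r) ≤ ν(S)/μ(S). -/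

import Mathlib

open Finset

/-- An edge-weighted hypergraph on a finite vertex set `V`: a finite set of hyperedges,
each a nonempty subset of `V`, with positive weights. -/
structure WHypergraph (V : Type*) [Fintype V] [DecidableEq V] where
  E : Finset (Finset V)
  w : Finset V → ℝ
  edge_nonempty : ∀ e ∈ E, e.Nonempty
  w_pos : ∀ e ∈ E, 0 < w e

namespace WHypergraph

variable {V : Type*} [Fintype V] [DecidableEq V]

/-- The weight of a vertex: total weight of hyperedges containing it. -/
noncomputable def wv (H : WHypergraph V) (v : V) : ℝ :=
  ∑ e ∈ H.E.filter (fun e => v ∈ e), H.w e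

/-- The weight of a set of vertices. -/
noncomputable def wS (H : WHypergraph V) (S : Finset V) : ℝ := ∑ v ∈ S, H.wv v

/-- The boundary of `S`: hyperedges meeting both `S` and its complement. -/
noncomputable def bdry (H : WHypergraph V) (S : Finset V) : Finset (Finset V) :=
  H.E.filter (fun e => (e ∩ S).Nonempty ∧ (e \ S).Nonempty)

/-- The expansion `φ(S)` of a set of vertices. -/
noncomputable def phi (H : WHypergraph V) (S : Finset V) : ℝ :=
  (∑ e ∈ H.bdry S, H.w e) / H.wS S

/-- `max_{u,v ∈ e} (f u - f v)^2`. -/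
noncomputable def edgeDisc (H : WHypergraph V) (f : V → ℝ) (e : Finset V) : ℝ :=
  sSup {x : ℝ | ∃ u ∈ e, ∃ v ∈ e, (f u - f v) ^ 2 = x}

/-- The discrepancy ratio `D_w(f)`. -/
noncomputable def disc (H : WHypergraph V) (f : V → ℝ) : ℝ :=
  (∑ e ∈ H.E, H.w e * H.edgeDisc f e) / ∑ u : V, H.wv u * f u ^ 2

/-- The weighted inner product `⟨f,g⟩_w`. -/
noncomputable def wip (H : WHypergraph V) (f g : V → ℝ) : ℝ :=
  ∑ u : V, H.wv u * f u * g u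

/-- `γ₂`: infimum of the discrepancy ratio over nonzero `f ⊥_w 1`. -/
noncomputable def gamma2 (H : WHypergraph V) : ℝ :=
  sInf {x : ℝ | ∃ f : V → ℝ, f ≠ 0 ∧ H.wip f (fun _ => 1) = 0 ∧ H.disc f = x}

/-- The hypergraph expansion `φ_H`. -/
noncomputable def phiH (H : WHypergraph V) : ℝ :=
  sInf {x : ℝ | ∃ S : Finset V, S.Nonempty ∧ S ≠ univ ∧
    x = max (H.phi S) (H.phi Sᶜ)}

/-- `ζ_k`: inf over `k`-tuples of nonzero pairwise `w`-orthogonal vectors of the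
sup of the discrepancy ratio over nonzero vectors in their span. -/
noncomputable def zeta (H : WHypergraph V) (k : ℕ) : ℝ :=
  sInf {x : ℝ | ∃ f : Fin k → V → ℝ, (∀ i, f i ≠ 0) ∧
    (∀ i j, i ≠ j → H.wip (f i) (f j) = 0) ∧
    x = sSup {y : ℝ | ∃ h : V → ℝ, h ≠ 0 ∧
      h ∈ Submodule.span ℝ (Set.range f) ∧ H.disc h = y}}

/-- `ξ_k`: inf over `k`-tuples of nonzero pairwise `w`-orthogonal vectors of the
maximum discrepancy ratio among them. -/
noncomputable def xi (H : WHypergraph V) (k : ℕ) : ℝ :=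
  sInf {x : ℝ | ∃ f : Fin k → V → ℝ, (∀ i, f i ≠ 0) ∧
    (∀ i j, i ≠ j → H.wip (f i) (f j) = 0) ∧
    x = sSup {y : ℝ | ∃ i, H.disc (f i) = y}}

/-- A sequence of procedural minimizers: `f 0` is a nonzero constant vector, each `f i`
is nonzero and `w`-orthogonal to the previous ones, and attains the infimum of the
discrepancy ratio over nonzero vectors `w`-orthogonal to the previous ones. -/
def IsProcMin (H : WHypergraph V) {k : ℕ} (f : Fin k → V → ℝ) : Prop :=
  (∀ i, f i ≠ 0) ∧
  (∀ i : Fin k, (i : ℕ) = 0 → ∃ c : ℝ, f i = fun _ => c) ∧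
  (∀ i j : Fin k, (j : ℕ) < (i : ℕ) → H.wip (f i) (f j) = 0) ∧
  (∀ i : Fin k, 0 < (i : ℕ) → H.disc (f i) =
    sInf {x : ℝ | ∃ g : V → ℝ, g ≠ 0 ∧
      (∀ j : Fin k, (j : ℕ) < (i : ℕ) → H.wip g (f j) = 0) ∧ H.disc g = x})

end WHypergraph

/-!
Layer-cake argument. Extending `‖u_i‖²` by `0` outside `S` gives a function `f ≥ 0` whose
superlevel sets at positive levels are the sets `S_r`. List `0` and the positive values of `f`
as `0 = t₀ < t₁ < ⋯ < t_m` and give the level `t_j` the weight `t_j - t_{j-1}`. Then every value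
`f v` is the total weight of the levels `t_j ≤ f v`, so the weighted volumes `w(S_{t_j})` add up
to `μ(S)`; and an edge `e` is cut by `S_t` exactly when `min_e f < t ≤ max_e f`, so the weighted
cut weights `w(∂S_{t_j})` add up to `Σ_e w_e (max_e f - min_e f) = ν(S)`. Hence some level has
cut-to-volume ratio at most `ν(S)/μ(S)`.
-/

namespace Finset

noncomputable def gapBelow (T : Finset ℝ) (t : ℝ) : ℝ :=
  t - (insert 0 {s ∈ T | s < t}).max' (insert_nonempty _ _)

theorem gapBelow_pos {T : Finset ℝ} {t : ℝ} (ht : 0 < t) : 0 < T.gapBelow t := by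
  rw [gapBelow, sub_pos, max'_lt_iff]
  simp only [mem_insert, mem_filter]
  rintro s (rfl | ⟨-, hs⟩) <;> assumption

theorem gapBelow_insert_of_lt {T : Finset ℝ} {M t : ℝ} (h : t < M) :
    (insert M T).gapBelow t = T.gapBelow t := by
  simp [gapBelow, filter_insert, not_lt.mpr h.le]

theorem sum_gapBelow_filter_le {T : Finset ℝ} (hT : ∀ t ∈ T, 0 < t) {a : ℝ}
    (ha : a ∈ insert 0 T) : ∑ t ∈ T with t ≤ a, T.gapBelow t = a := by
  induction T using induction_on_max generalizing a with
  | empty => simp_all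
  | insert M T hlt ih =>
    have hT' : ∀ t ∈ T, 0 < t := fun t ht => hT t (mem_insert_of_mem ht)
    have hgap : ∀ t ∈ T, (insert M T).gapBelow t = T.gapBelow t :=
      fun t ht => gapBelow_insert_of_lt (hlt t ht)
    rw [insert_comm, mem_insert] at ha
    obtain rfl | ha := ha
    · set b := (insert 0 T).max' (insert_nonempty _ _)
      have hsum : ∑ t ∈ T, T.gapBelow t = b := by
        have := ih hT' (max'_mem (insert 0 T) (insert_nonempty _ _))
        rwa [filter_true_of_mem fun t ht => le_max' _ _ (mem_insert_of_mem ht)] at this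
      have hM : (insert a T).gapBelow a = a - b := by
        simp_rw [gapBelow, filter_insert, lt_irrefl, if_false, filter_true_of_mem hlt, b]
      rw [filter_true_of_mem fun t ht => ?_, sum_insert fun hM => (hlt a hM).false,
        sum_congr rfl hgap, hsum, hM, sub_add_cancel]
      obtain rfl | ht := mem_insert.1 ht
      exacts [le_rfl, (hlt t ht).le]
    · have haM : a < M := by
        obtain rfl | ha := mem_insert.1 ha
        exacts [hT _ (mem_insert_self _ _), hlt a ha]
      rw [filter_insert, if_neg (not_le.mpr haM),
        sum_congr rfl fun t ht => hgap t (mem_filter.1 ht).1, ih hT' ha]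

theorem sum_gapBelow_filter_Ioc {T : Finset ℝ} (hT : ∀ t ∈ T, 0 < t) {a b : ℝ}
    (ha : a ∈ insert 0 T) (hb : b ∈ insert 0 T) (hba : b ≤ a) :
    ∑ t ∈ T with t ∈ Set.Ioc b a, T.gapBelow t = a - b := by
  have hsplit := sum_filter_add_sum_filter_not {t ∈ T | t ≤ a} (b < ·) T.gapBelow
  have hIoc : {t ∈ T | t ≤ a ∧ b < t} = {t ∈ T | t ∈ Set.Ioc b a} :=
    filter_congr fun t _ => and_comm
  have hle : {t ∈ T | t ≤ a ∧ ¬b < t} = {t ∈ T | t ≤ b} :=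
    filter_congr fun t _ => ⟨fun h => not_lt.1 h.2, fun h => ⟨h.trans hba, not_lt.2 h⟩⟩
  rw [filter_filter, filter_filter, hIoc, hle, sum_gapBelow_filter_le hT ha,
    sum_gapBelow_filter_le hT hb] at hsplit
  linarith

theorem exists_div_le_sum_mul_div_sum_mul {ι : Type*} {s : Finset ι} (hs : s.Nonempty)
    {c a b : ι → ℝ} (hc : ∀ i ∈ s, 0 < c i) (ha : ∀ i ∈ s, 0 ≤ a i) (hb : ∀ i ∈ s, 0 ≤ b i) :
    ∃ i ∈ s, a i / b i ≤ (∑ i ∈ s, c i * a i) / ∑ i ∈ s, c i * b i := by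
  set A := ∑ i ∈ s, c i * a i
  set B := ∑ i ∈ s, c i * b i
  have hA : 0 ≤ A := sum_nonneg fun i hi => mul_nonneg (hc i hi).le (ha i hi)
  have hcb : ∀ i ∈ s, 0 ≤ c i * b i := fun i hi => mul_nonneg (hc i hi).le (hb i hi)
  obtain ⟨i, hi, hcross⟩ : ∃ i ∈ s, c i * (a i * B) ≤ c i * (A * b i) := by
    refine exists_le_of_sum_le hs (le_of_eq ?_)
    simp only [A, B, mul_sum, sum_mul]
    rw [sum_comm]
    exact sum_congr rfl fun _ _ => sum_congr rfl fun _ _ => by ring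
  refine ⟨i, hi, ?_⟩
  obtain hbi | hbi := (hb i hi).eq_or_lt
  · -- `a i / 0 = 0`, so an index with `b i = 0` is harmless.
    rw [← hbi, div_zero]
    exact div_nonneg hA (sum_nonneg hcb)
  · have hB : 0 < B := (mul_pos (hc i hi) hbi).trans_le (single_le_sum hcb hi)
    rw [div_le_div_iff₀ hbi hB]
    exact le_of_mul_le_mul_left hcross (hc i hi)

end Finset

namespace WHypergraph

section LevelSets

variable {V : Type*} [Fintype V]

noncomputable def superlevel (f : V → ℝ) (t : ℝ) : Finset V := {v | t ≤ f v}

noncomputable def positiveValues (f : V → ℝ) : Finset ℝ := {x ∈ univ.image f | 0 < x}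

theorem mem_insert_zero_positiveValues {f : V → ℝ} (hf : 0 ≤ f) (v : V) :
    f v ∈ insert 0 (positiveValues f) := by
  obtain h | h := (hf v).eq_or_lt
  · exact h ▸ mem_insert_self _ _
  · exact mem_insert_of_mem (mem_filter.2 ⟨mem_image_of_mem f (mem_univ v), h⟩)

theorem pos_of_mem_positiveValues {f : V → ℝ} {t : ℝ} (ht : t ∈ positiveValues f) : 0 < t :=
  (mem_filter.1 ht).2

theorem superlevel_nonempty_of_mem_positiveValues {f : V → ℝ} {t : ℝ}
    (ht : t ∈ positiveValues f) : (superlevel f t).Nonempty := by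
  obtain ⟨v, -, rfl⟩ := mem_image.1 (mem_filter.1 ht).1
  exact ⟨v, by simp [superlevel]⟩

theorem positiveValues_nonempty {f : V → ℝ} (hf : 0 ≤ f) (hf0 : f ≠ 0) :
    (positiveValues f).Nonempty := by
  obtain ⟨v, hv⟩ := Function.ne_iff.1 hf0
  exact ⟨f v, mem_filter.2 ⟨mem_image_of_mem f (mem_univ v), (hf v).lt_of_ne' hv⟩⟩

theorem superlevel_ite [DecidableEq V] {g : V → ℝ} {S : Finset V} {t : ℝ} (ht : 0 < t) :
    superlevel (fun v => if v ∈ S then g v else 0) t = {v ∈ S | t ≤ g v} := by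
  ext v
  by_cases hv : v ∈ S <;> simp [superlevel, hv, ht.not_ge]

end LevelSets

section Oscillation

variable {V : Type*} [DecidableEq V] {g : V → ℝ} {S : Finset V}

noncomputable def edgeOsc (f : V → ℝ) (e : Finset V) : ℝ := sSup (f '' e) - sInf (f '' e)

theorem edgeOsc_ite_of_subset {e : Finset V} (he : e ⊆ S) :
    edgeOsc (fun v => if v ∈ S then g v else 0) e = sSup (g '' e) - sInf (g '' e) := by
  rw [edgeOsc, Set.image_congr fun v hv => if_pos (he hv)]

theorem edgeOsc_ite_of_disjoint {e : Finset V} (hne : e.Nonempty) (he : Disjoint e S) :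
    edgeOsc (fun v => if v ∈ S then g v else 0) e = 0 := by
  rw [edgeOsc, Set.image_congr fun v hv => if_neg (disjoint_left.1 he hv),
    hne.to_set.image_const, csSup_singleton, csInf_singleton, sub_self]

end Oscillation

variable {V : Type*} [Fintype V] [DecidableEq V] {H : WHypergraph V}

theorem wv_nonneg (v : V) : 0 ≤ H.wv v :=
  sum_nonneg fun e he => (H.w_pos e (mem_filter.1 he).1).le

theorem mem_bdry_superlevel_iff {f : V → ℝ} {t : ℝ} {e : Finset V} :
    e ∈ H.bdry (superlevel f t) ↔ e ∈ H.E ∧ t ∈ Set.Ioc (sInf (f '' e)) (sSup (f '' e)) := by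
  simp only [bdry, mem_filter]
  refine and_congr_right fun he => ?_
  have hne := H.edge_nonempty e he
  rw [← sup'_eq_csSup_image e hne, ← inf'_eq_csInf_image e hne, Set.mem_Ioc, inf'_lt_iff,
    le_sup'_iff]
  simp [superlevel, Finset.Nonempty, and_comm]

theorem sum_gapBelow_mul_wS_superlevel {f : V → ℝ} (hf : 0 ≤ f) :
    ∑ t ∈ positiveValues f, (positiveValues f).gapBelow t * H.wS (superlevel f t) =
      ∑ v, H.wv v * f v := by
  simp only [wS, superlevel, sum_filter, mul_sum]
  rw [sum_comm]
  refine sum_congr rfl fun v _ => ?_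
  calc _ = (∑ t ∈ positiveValues f with t ≤ f v, (positiveValues f).gapBelow t) * H.wv v := by
        rw [sum_filter, sum_mul]
        exact sum_congr rfl fun t _ => by split_ifs <;> ring
    _ = H.wv v * f v := by
        rw [sum_gapBelow_filter_le (fun _ => pos_of_mem_positiveValues)
          (mem_insert_zero_positiveValues hf v), mul_comm]

theorem sum_gapBelow_mul_bdry_superlevel {f : V → ℝ} (hf : 0 ≤ f) :
    ∑ t ∈ positiveValues f, (positiveValues f).gapBelow t * ∑ e ∈ H.bdry (superlevel f t), H.w e =
      ∑ e ∈ H.E, H.w e * edgeOsc f e := by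
  have hbdry : ∀ t, H.bdry (superlevel f t) =
      {e ∈ H.E | t ∈ Set.Ioc (sInf (f '' (e : Finset V))) (sSup (f '' e))} :=
    fun t => by ext e; rw [mem_bdry_superlevel_iff, mem_filter]
  simp only [hbdry, sum_filter, mul_sum]
  rw [sum_comm]
  refine sum_congr rfl fun e he => ?_
  have hne : (f '' e).Nonempty := (H.edge_nonempty e he).to_set.image f
  have hfin : (f '' e).Finite := e.finite_toSet.image f
  have hvalue : ∀ x ∈ f '' e, x ∈ insert 0 (positiveValues f) := by
    rintro _ ⟨v, -, rfl⟩
    exact mem_insert_zero_positiveValues hf v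
  calc _ = H.w e * ∑ t ∈ positiveValues f with t ∈ Set.Ioc (sInf (f '' e)) (sSup (f '' e)),
        (positiveValues f).gapBelow t := by
        rw [sum_filter, mul_sum]
        exact sum_congr rfl fun t _ => by split_ifs <;> ring
    _ = H.w e * edgeOsc f e := by
        rw [sum_gapBelow_filter_Ioc (fun _ => pos_of_mem_positiveValues)
          (hvalue _ (hne.csSup_mem hfin)) (hvalue _ (hne.csInf_mem hfin))
          (csInf_le_csSup hne hfin.bddBelow hfin.bddAbove), edgeOsc]

theorem exists_phi_superlevel_le {f : V → ℝ} (hf : 0 ≤ f) (hf0 : f ≠ 0) :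
    ∃ t, 0 < t ∧ (superlevel f t).Nonempty ∧
      H.phi (superlevel f t) ≤ (∑ e ∈ H.E, H.w e * edgeOsc f e) / ∑ v, H.wv v * f v := by
  rw [← sum_gapBelow_mul_bdry_superlevel hf, ← sum_gapBelow_mul_wS_superlevel hf]
  obtain ⟨t, ht, hle⟩ := exists_div_le_sum_mul_div_sum_mul (positiveValues_nonempty hf hf0)
    (fun t ht => gapBelow_pos (pos_of_mem_positiveValues ht))
    (a := fun t => ∑ e ∈ H.bdry (superlevel f t), H.w e)
    (fun t _ => sum_nonneg fun e he => (H.w_pos e (filter_subset _ _ he)).le)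
    (b := fun t => H.wS (superlevel f t)) (fun t _ => sum_nonneg fun v _ => wv_nonneg v)
  exact ⟨t, pos_of_mem_positiveValues ht, superlevel_nonempty_of_mem_positiveValues ht, hle⟩

section Restriction

variable {g : V → ℝ} {S : Finset V}

theorem edgeOsc_ite_of_mem_bdry (hg : 0 ≤ g) {e : Finset V} (he : e ∈ H.bdry S) :
    edgeOsc (fun v => if v ∈ S then g v else 0) e = sSup (g '' ↑(S ∩ e)) := by
  obtain ⟨heE, ⟨i, hi⟩, ⟨o, ho⟩⟩ := mem_filter.1 he
  rw [mem_inter] at hi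
  rw [mem_sdiff] at ho
  have hSe : (S ∩ e).Nonempty := ⟨i, mem_inter.2 hi.symm⟩
  have hne : e.Nonempty := ⟨i, hi.1⟩
  have hmin : IsLeast ((fun v => if v ∈ S then g v else 0) '' e) 0 := by
    refine ⟨⟨o, ho.1, if_neg ho.2⟩, ?_⟩
    rintro _ ⟨v, -, rfl⟩
    exact ite_nonneg (hg v) le_rfl
  rw [edgeOsc, hmin.csInf_eq, sub_zero, ← sup'_eq_csSup_image e hne,
    ← sup'_eq_csSup_image _ hSe]
  refine le_antisymm (sup'_le _ _ fun v hv => ?_) (sup'_le _ _ fun v hv => ?_)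
  · split_ifs with hvS
    · exact le_sup' g (mem_inter.2 ⟨hvS, hv⟩)
    · exact (hg i).trans (le_sup' g (mem_inter.2 hi.symm))
  · obtain ⟨hvS, hve⟩ := mem_inter.1 hv
    exact le_sup'_of_le _ hve (if_pos hvS).ge

theorem sum_w_mul_edgeOsc_ite (hg : 0 ≤ g) :
    ∑ e ∈ H.E, H.w e * edgeOsc (fun v => if v ∈ S then g v else 0) e =
      ∑ e ∈ H.E with e ⊆ S, H.w e * (sSup (g '' e) - sInf (g '' e)) +
        ∑ e ∈ H.bdry S, H.w e * sSup (g '' ↑(S ∩ e)) := by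
  rw [← sum_filter_add_sum_filter_not H.E (· ⊆ S),
    ← sum_filter_add_sum_filter_not {e ∈ H.E | ¬e ⊆ S} (fun e => (e ∩ S).Nonempty),
    filter_filter, filter_filter]
  have hbdry : {e ∈ H.E | ¬e ⊆ S ∧ (e ∩ S).Nonempty} = H.bdry S :=
    filter_congr fun e _ => by rw [← sdiff_nonempty]; exact and_comm
  have houtside : ∑ e ∈ H.E with ¬e ⊆ S ∧ ¬(e ∩ S).Nonempty,
      H.w e * edgeOsc (fun v => if v ∈ S then g v else 0) e = 0 := by
    refine sum_eq_zero fun e he => ?_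
    obtain ⟨heE, -, hdisj⟩ := mem_filter.1 he
    rw [edgeOsc_ite_of_disjoint (H.edge_nonempty e heE)
      (disjoint_iff_inter_eq_empty.2 (not_nonempty_iff_eq_empty.1 hdisj)), mul_zero]
  rw [hbdry, houtside, add_zero]
  congr 1
  · exact sum_congr rfl fun e he => by rw [edgeOsc_ite_of_subset (mem_filter.1 he).2]
  · exact sum_congr rfl fun e he => by rw [edgeOsc_ite_of_mem_bdry hg he]

theorem exists_phi_filter_le (hg : 0 ≤ g) (hS : ∃ i ∈ S, g i ≠ 0) :
    ∃ r, 0 < r ∧ {i ∈ S | r ≤ g i}.Nonempty ∧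
      H.phi {i ∈ S | r ≤ g i} ≤
        (∑ e ∈ H.E with e ⊆ S, H.w e * (sSup (g '' e) - sInf (g '' e)) +
          ∑ e ∈ H.bdry S, H.w e * sSup (g '' ↑(S ∩ e))) / ∑ i ∈ S, H.wv i * g i := by
  have hf : 0 ≤ fun v => if v ∈ S then g v else 0 := fun v => ite_nonneg (hg v) le_rfl
  have hf0 : (fun v => if v ∈ S then g v else 0) ≠ 0 := by
    obtain ⟨i, hiS, hi⟩ := hS
    exact Function.ne_iff.2 ⟨i, by simpa [hiS] using hi⟩
  obtain ⟨r, hr, hne, hle⟩ := exists_phi_superlevel_le (H := H) hf hf0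
  rw [superlevel_ite hr] at hne hle
  rw [sum_w_mul_edgeOsc_ite hg] at hle
  simp only [mul_ite, mul_zero, sum_ite_mem, univ_inter] at hle
  exact ⟨r, hr, hne, hle⟩

end Restriction

end WHypergraph

theorem sweep_cut_mu_nu_general {V : Type*} [Fintype V] [DecidableEq V]
    (H : WHypergraph V)
    (k : ℕ) (u : V → Fin k → ℝ) (S : Finset V)
    (hS : ∃ i ∈ S, u i ≠ 0) :
    ∃ r : ℝ, 0 < r ∧
      (S.filter fun i => r ≤ ∑ s : Fin k, u i s ^ 2).Nonempty ∧
      H.phi (S.filter fun i => r ≤ ∑ s : Fin k, u i s ^ 2) ≤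
        ((∑ e ∈ H.E.filter (fun e => e ⊆ S), H.w e *
            (sSup {y : ℝ | ∃ i ∈ e, (∑ s : Fin k, u i s ^ 2) = y} -
              sInf {y : ℝ | ∃ i ∈ e, (∑ s : Fin k, u i s ^ 2) = y})) +
          ∑ e ∈ H.bdry S, H.w e *
            sSup {y : ℝ | ∃ i ∈ S ∩ e, (∑ s : Fin k, u i s ^ 2) = y}) /
        ∑ i ∈ S, H.wv i * ∑ s : Fin k, u i s ^ 2 := by
  refine H.exists_phi_filter_le (fun i => sum_nonneg fun s _ => sq_nonneg (u i s)) ?_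
  obtain ⟨i, hiS, hi⟩ := hS
  refine ⟨i, hiS, fun hzero => hi (funext fun s => ?_)⟩
  exact pow_eq_zero_iff two_ne_zero |>.1
    ((sum_eq_zero_iff_of_nonneg fun s _ => sq_nonneg (u i s)).1 hzero s (mem_univ s))

/-- Sweep cut on the level sets of `‖u_i‖²`: for any vectors `u_i ∈ ℝ^k` and any set `S`
containing a vertex with `u_i ≠ 0`, there is `r > 0` such that
`S_r := {i ∈ S : ‖u_i‖² ≥ r}` is nonempty and `φ(S_r) ≤ ν(S)/μ(S)`, where
`μ(S) = Σ_{i∈S} w_i ‖u_i‖²` and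
`ν(S) = Σ_{e⊆S} w_e (max_{i∈e}‖u_i‖² − min_{i∈e}‖u_i‖²) + Σ_{e∈∂S} w_e max_{i∈S∩e}‖u_i‖²`. -/
theorem sweep_cut_mu_nu {V : Type*} [Fintype V] [DecidableEq V]
    (H : WHypergraph V) (hw : ∀ v : V, 0 < H.wv v)
    (k : ℕ) (u : V → Fin k → ℝ) (S : Finset V)
    (hS : ∃ i ∈ S, u i ≠ 0) :
    ∃ r : ℝ, 0 < r ∧
      (S.filter fun i => r ≤ ∑ s : Fin k, u i s ^ 2).Nonempty ∧
      H.phi (S.filter fun i => r ≤ ∑ s : Fin k, u i s ^ 2) ≤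
        ((∑ e ∈ H.E.filter (fun e => e ⊆ S), H.w e *
            (sSup {y : ℝ | ∃ i ∈ e, (∑ s : Fin k, u i s ^ 2) = y} -
              sInf {y : ℝ | ∃ i ∈ e, (∑ s : Fin k, u i s ^ 2) = y})) +
          ∑ e ∈ H.bdry S, H.w e *
            sSup {y : ℝ | ∃ i ∈ S ∩ e, (∑ s : Fin k, u i s ^ 2) = y}) /
        ∑ i ∈ S, H.wv i * ∑ s : Fin k, u i s ^ 2 :=
  sweep_cut_mu_nu_general H k u S hS
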